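/- arXiv:1511.02175 — 4 statements merged into one kernel-verified Lean document; each statement's English description precedes it below -/
import Mathlib

section
/- Let a, d be integers with 0 < a < d, and let p be a prime with p > d. Then p ≡ a (mod d) if and only if in ℤ/pℤ the fraction (d-a)/d is the smallest element of the set {1/d, 2/d, ..., (d-1)/d}, where i/d denotes the unique r with 0 < r < p and r·d ≡ i (mod p), and elements of ℤ/pℤ are compared via their representatives in {0,...,p-1}. -/
theorem congruence_iff_smallest_fraction (a d p : ℕ) (ha : 0 < a) (had : a < d)
    (hp : p.Prime) (hdp : d < p) :
    p % d = a ↔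
      ∀ r : ℕ, (0 < r ∧ r < p ∧ (r * d) % p = (d - a) % p) →
        ∀ i : ℕ, 1 ≤ i → i < d →
          ∀ s : ℕ, (0 < s ∧ s < p ∧ (s * d) % p = i % p) → r ≤ s := by
  haveI := Fact.mk hp
  have hd0 : 0 < d := lt_trans ha had
  have hd1 : 1 < d := lt_of_le_of_lt ha had
  have hp0 : 0 < p := hp.pos
  have hdap : d - a < p := lt_trans (by omega) hdp
  have hda0 : 0 < d - a := by omega
  have hdz : (d : ZMod p) ≠ 0 := by
    rw [Ne, ZMod.natCast_eq_zero_iff]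
    exact fun hdvd => absurd (Nat.le_of_dvd hd0 hdvd) (not_le.mpr hdp)
  have cancel : ∀ r s : ℕ, r < p → s < p → (r * d) % p = (s * d) % p → r = s := by
    intro r s hr hs hmod
    have h1 : ((r * d : ℕ) : ZMod p) = ((s * d : ℕ) : ZMod p) :=
      (ZMod.natCast_eq_natCast_iff _ _ _).mpr hmod
    push_cast at h1
    have h2 : (r : ZMod p) = s := mul_right_cancel₀ hdz h1
    have h3 := congrArg ZMod.val h2
    rwa [ZMod.val_cast_of_lt hr, ZMod.val_cast_of_lt hs] at h3
  constructor
  · intro h r hr i hi1 hi2 s hs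
    obtain ⟨hr0, hrp, hrd⟩ := hr
    obtain ⟨hs0, hsp, hsd⟩ := hs
    set q := p / d with hq
    have hpq : d * q + a = p := by rw [← h]; exact Nat.div_add_mod p d
    have hring : (q + 1) * d = d * q + d := by ring
    have hr0d : (q + 1) * d = p + (d - a) := by omega
    have hr0p : q + 1 < p := by
      by_contra hc
      push_neg at hc
      have h2 : p * d ≤ (q + 1) * d := Nat.mul_le_mul_right d hc
      have h3 : p * 2 ≤ p * d := Nat.mul_le_mul_left p hd1
      omega
    have hreq : r = q + 1 := by
      refine cancel r (q + 1) hrp hr0p ?_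
      rw [hrd, hr0d, Nat.add_mod_left]
    have hsmod : (s * d) % p = i := by rw [hsd, Nat.mod_eq_of_lt (lt_trans hi2 hdp)]
    have hsdec : s * d = p * (s * d / p) + i := by
      rw [← hsmod]; exact (Nat.div_add_mod _ _).symm
    set k := s * d / p with hk
    have hsd_ge : d ≤ s * d := Nat.le_mul_of_pos_left d hs0
    have hk1 : 1 ≤ k := by
      by_contra hc
      push_neg at hc
      have hk0 : k = 0 := Nat.lt_one_iff.mp hc
      rw [hk0, Nat.mul_zero] at hsdec
      omega
    rcases eq_or_lt_of_le hk1 with hk1' | hk2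
    · -- k = 1 : s*d = p + i, so s = q + 1 = r
      rw [← hk1', Nat.mul_one] at hsdec
      have hseq : s = q + 1 := by
        rcases lt_trichotomy s (q + 1) with h1 | h1 | h1
        · exfalso
          have h2 : s * d ≤ q * d := Nat.mul_le_mul_right d (by omega)
          have h3 : q * d = d * q := Nat.mul_comm q d
          omega
        · exact h1
        · exfalso
          have h2 : (q + 2) * d ≤ s * d := Nat.mul_le_mul_right d (by omega)
          have h3 : (q + 2) * d = d * q + 2 * d := by ring
          omega
      omega
    · have h2 : p * 2 ≤ p * k := Nat.mul_le_mul_left p hk2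
      have hlt : r * d < s * d := by rw [hreq, hr0d]; omega
      exact le_of_lt (Nat.lt_of_mul_lt_mul_right hlt)
  · intro H
    -- construct the witness r for (d-a)/d
    set x : ZMod p := ((d - a : ℕ) : ZMod p) * (d : ZMod p)⁻¹ with hx
    set r := x.val with hrdef
    have hrp : r < p := ZMod.val_lt x
    have hxd : ((r * d : ℕ) : ZMod p) = ((d - a : ℕ) : ZMod p) := by
      push_cast
      rw [hrdef, ZMod.natCast_val, ZMod.cast_id, hx, mul_assoc,
        inv_mul_cancel₀ hdz, mul_one]
    have hrd : (r * d) % p = (d - a) % p := (ZMod.natCast_eq_natCast_iff _ _ _).mp hxd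
    have hr0 : 0 < r := by
      rcases Nat.eq_zero_or_pos r with h0 | h0
      · exfalso
        rw [h0, Nat.zero_mul, Nat.zero_mod, Nat.mod_eq_of_lt hdap] at hrd
        omega
      · exact h0
    set a' := p % d with ha'
    have ha'd : a' < d := Nat.mod_lt p hd0
    have ha'0 : 0 < a' := by
      rcases Nat.eq_zero_or_pos a' with h0 | h0
      · exfalso
        have hdvd : d ∣ p := Nat.dvd_of_mod_eq_zero h0
        rcases (Nat.Prime.eq_one_or_self_of_dvd hp d hdvd) with h1 | h1 <;> omega
      · exact h0
    set q := p / d with hq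
    have hpq : d * q + a' = p := Nat.div_add_mod p d
    have hring : (q + 1) * d = d * q + d := by ring
    have hs_eq : (q + 1) * d = p + (d - a') := by omega
    have hsp : q + 1 < p := by
      by_contra hc
      push_neg at hc
      have h2 : p * d ≤ (q + 1) * d := Nat.mul_le_mul_right d hc
      have h3 : p * 2 ≤ p * d := Nat.mul_le_mul_left p hd1
      omega
    have hkey : r ≤ q + 1 := by
      refine H r ⟨hr0, hrp, hrd⟩ (d - a') (by omega) (by omega) (q + 1)
        ⟨Nat.succ_pos q, hsp, ?_⟩
      rw [hs_eq, Nat.add_mod_left]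
    have hrmod : (r * d) % p = d - a := by rw [hrd, Nat.mod_eq_of_lt hdap]
    have hrdec : r * d = p * (r * d / p) + (d - a) := by
      rw [← hrmod]; exact (Nat.div_add_mod _ _).symm
    set m := r * d / p with hm
    have hrd_ge : d ≤ r * d := Nat.le_mul_of_pos_left d hr0
    have hm1 : 1 ≤ m := by
      by_contra hc
      push_neg at hc
      have hm0 : m = 0 := Nat.lt_one_iff.mp hc
      rw [hm0, Nat.mul_zero] at hrdec
      omega
    have hrs : r * d ≤ (q + 1) * d := Nat.mul_le_mul_right d hkey
    have hmeq : m = 1 := by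
      by_contra hc
      have hm2 : 2 ≤ m := by omega
      have h2 : p * 2 ≤ p * m := Nat.mul_le_mul_left p hm2
      omega
    rw [hmeq, Nat.mul_one] at hrdec
    -- r*d = p + (d-a) = d*q + (a' + (d-a)); force r = q+1 and a' = a
    have hreq : r = q + 1 := by
      rcases lt_trichotomy r (q + 1) with h1 | h1 | h1
      · exfalso
        have h2 : r * d ≤ q * d := Nat.mul_le_mul_right d (by omega)
        have h3 : q * d = d * q := Nat.mul_comm q d
        omega
      · exact h1
      · exfalso
        have h2 : (q + 2) * d ≤ r * d := Nat.mul_le_mul_right d (by omega)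
        have h3 : (q + 2) * d = d * q + 2 * d := by ring
        omega
    rw [hreq] at hrdec
    omega
end

section
/- Let h : (0,∞) → (0,∞) be increasing and eventually semi-additive with threshold M, and let (s_n) be an increasing sequence of naturals that is h-thin, i.e., there exists r > 3 with r·h(π(s_n)) < h(π(s_{n+1})) for almost all n. Then for almost all n, 2·π(s_n) < π(s_{n+1}). -/
open Filter

theorem hthin_implies_pi_growth (h : ℝ → ℝ) (M : ℝ) (hM : 0 < M)
    (hpos : ∀ x : ℝ, 0 < x → 0 < h x)
    (hmono : ∀ x y : ℝ, 0 < x → x ≤ y → h x ≤ h y)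
    (hadd : ∀ x y : ℝ, M < y → y ≤ x → h (x + y) ≤ h x + h y)
    (s : ℕ → ℕ) (hs : StrictMono s) (r : ℝ) (hr : 3 < r)
    (hthin : ∀ᶠ n in atTop,
      r * h ((Nat.primeCounting (s n) : ℝ)) < h ((Nat.primeCounting (s (n + 1)) : ℝ))) :
    ∀ᶠ n in atTop, 2 * Nat.primeCounting (s n) < Nat.primeCounting (s (n + 1)) := by
  have hst : Tendsto (fun n => (Nat.primeCounting (s n) : ℝ)) atTop atTop := by
    exact tendsto_natCast_atTop_atTop.comp (Nat.tendsto_primeCounting.comp hs.tendsto_atTop)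
  have hbig : ∀ᶠ n in atTop, M < (Nat.primeCounting (s n) : ℝ) :=
    hst.eventually_gt_atTop M
  filter_upwards [hthin, hbig] with n hn hMn
  by_contra hcon
  push_neg at hcon
  set x : ℝ := (Nat.primeCounting (s n) : ℝ)
  set y : ℝ := (Nat.primeCounting (s (n + 1)) : ℝ)
  have hx : 0 < x := hM.trans hMn
  have hyx : y ≤ 2 * x := by
    have : (Nat.primeCounting (s (n + 1)) : ℝ) ≤ (2 * Nat.primeCounting (s n) : ℕ) := by
      exact_mod_cast hcon
    simpa [x, y, two_mul] using this
  have hy : 0 < y := by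
    have hxy : (Nat.primeCounting (s n) : ℝ) ≤ (Nat.primeCounting (s (n + 1)) : ℝ) := by
      exact_mod_cast Nat.monotone_primeCounting (le_of_lt (hs (Nat.lt_succ_self n)))
    linarith [hxy]
  have h1 : h y ≤ h (2 * x) := hmono y (2 * x) hy hyx
  have h2 : h (2 * x) ≤ h x + h x := by
    have := hadd x x hMn le_rfl
    simpa [two_mul] using this
  have hhx : 0 < h x := hpos x hx
  nlinarith [hn]
end

section
/- Let h : (0,∞) → (0,∞) be continuous, unbounded, increasing, and eventually semi-additive, and let (s_n) be an increasing sequence of naturals that is h-thin (there is r > 3 with r·h(π(s_n)) < h(π(s_{n+1})) for almost all n). Define the alternating set H = ℙ ∩ ⋃_{n≥1} (s_{2n}, s_{2n+1}). Then the h-density of H does not exist; specifically, liminf_n h(π_H(n))/h(π(n)) ≤ 1/r < 1 - 1/r ≤ limsup_n h(π_H(n))/h(π(n)). -/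
open Filter

lemma primes_le_ncard (n : ℕ) : {p : ℕ | p.Prime ∧ p ≤ n}.ncard = Nat.primeCounting n := by
  have hset : {p : ℕ | p.Prime ∧ p ≤ n} = ↑((Finset.range (n+1)).filter Nat.Prime) := by
    ext p
    simp [Finset.mem_filter, Finset.mem_range, Nat.lt_succ_iff, and_comm]
  rw [hset, Set.ncard_coe_finset, Nat.primeCounting, Nat.primeCounting',
    Nat.count_eq_card_filter_range]

lemma primes_Ioc_ncard (a b : ℕ) :
    Nat.primeCounting a + {p : ℕ | p.Prime ∧ a < p ∧ p ≤ b}.ncard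
      = Nat.primeCounting (max a b) := by
  have hset : {p : ℕ | p.Prime ∧ a < p ∧ p ≤ b} = ↑((Finset.Ioc a b).filter Nat.Prime) := by
    ext p
    simp [Finset.mem_filter, Finset.mem_Ioc]
    tauto
  rw [hset, Set.ncard_coe_finset]
  rw [Nat.primeCounting, Nat.primeCounting', Nat.count_eq_card_filter_range,
    Nat.primeCounting, Nat.primeCounting', Nat.count_eq_card_filter_range]
  have hsplit : Finset.range (max a b + 1) = Finset.range (a+1) ∪ Finset.Ioc a b := by
    ext x; simp [Finset.mem_Ioc, Nat.lt_succ_iff]; omega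
  rw [hsplit, Finset.filter_union, Finset.card_union_of_disjoint]
  rw [Finset.disjoint_left]
  intro x hx hx'
  simp [Nat.lt_succ_iff] at hx hx'
  omega

lemma primeCounting_succ_le (m : ℕ) : Nat.primeCounting (m+1) ≤ Nat.primeCounting m + 1 := by
  rw [Nat.primeCounting, Nat.primeCounting', Nat.count_succ, Nat.primeCounting,
    Nat.primeCounting']
  split <;> omega

theorem alternating_set_no_h_density (h : ℝ → ℝ) (M : ℝ) (hM : 0 < M)
    (hcont : ContinuousOn h (Set.Ioi (0 : ℝ)))
    (hunb : ∀ C : ℝ, ∃ x : ℝ, 0 < x ∧ C < h x)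
    (hpos : ∀ x : ℝ, 0 < x → 0 < h x)
    (hmono : ∀ x y : ℝ, 0 < x → x ≤ y → h x ≤ h y)
    (hadd : ∀ x y : ℝ, M < y → y ≤ x → h (x + y) ≤ h x + h y)
    (s : ℕ → ℕ) (hs : StrictMono s) (r : ℝ) (hr : 3 < r)
    (hthin : ∀ᶠ n in atTop,
      r * h ((Nat.primeCounting (s n) : ℝ)) < h ((Nat.primeCounting (s (n + 1)) : ℝ))) :
    let H : Set ℕ := {p : ℕ | p.Prime ∧ ∃ k : ℕ, 1 ≤ k ∧ s (2 * k) < p ∧ p < s (2 * k + 1)}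
    liminf (fun n : ℕ => h (({p ∈ H | p ≤ n}.ncard : ℝ)) / h ((Nat.primeCounting n : ℝ))) atTop
        ≤ 1 / r ∧
      (1 : ℝ) / r < 1 - 1 / r ∧
      1 - 1 / r ≤
        limsup (fun n : ℕ => h (({p ∈ H | p ≤ n}.ncard : ℝ)) / h ((Nat.primeCounting n : ℝ))) atTop := by
  intro H
  have hr0 : (0:ℝ) < r := by linarith
  have hmid : (1:ℝ)/r < 1 - 1/r := by
    have h3 : (1:ℝ)/r < 1/3 := by
      rw [div_lt_div_iff₀ hr0 (by norm_num)]
      linarith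
    linarith
  obtain ⟨N₀, hN₀⟩ := eventually_atTop.mp hthin
  have hsn : Tendsto (fun n => Nat.primeCounting (s n)) atTop atTop :=
    Nat.tendsto_primeCounting.comp hs.tendsto_atTop
  obtain ⟨N₁, hN₁⟩ := eventually_atTop.mp (hsn.eventually_ge_atTop (⌈M⌉₊ + 1))
  set N := max N₀ N₁ with hN
  have hg1 : ∀ n, N ≤ n → 1 ≤ Nat.primeCounting (s n) := by
    intro n hn
    have := hN₁ n (le_trans (le_max_right N₀ N₁) hn)
    omega
  have hgM : ∀ n, N ≤ n → M < (Nat.primeCounting (s n) : ℝ) := by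
    intro n hn
    have h1 := hN₁ n (le_trans (le_max_right N₀ N₁) hn)
    have h2 : M ≤ (⌈M⌉₊ : ℝ) := Nat.le_ceil M
    have h3 : ((⌈M⌉₊ + 1 : ℕ) : ℝ) ≤ (Nat.primeCounting (s n) : ℝ) := by exact_mod_cast h1
    push_cast at h3
    linarith
  have hhpos : ∀ n, N ≤ n → 0 < h ((Nat.primeCounting (s n) : ℝ)) := by
    intro n hn
    refine hpos _ ?_
    have := hg1 n hn
    exact_mod_cast Nat.lt_of_lt_of_le Nat.zero_lt_one this
  have hthin' : ∀ n, N ≤ n →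
      r * h ((Nat.primeCounting (s n) : ℝ)) < h ((Nat.primeCounting (s (n+1)) : ℝ)) :=
    fun n hn => hN₀ n (le_trans (le_max_left N₀ N₁) hn)
  have habs : ∀ n, N ≤ n → ¬ (Nat.primeCounting (s (n+1)) ≤ 2 * Nat.primeCounting (s n)) := by
    intro n hn hcon
    have h1 : ((Nat.primeCounting (s (n+1)) : ℝ))
        ≤ (Nat.primeCounting (s n) : ℝ) + (Nat.primeCounting (s n) : ℝ) := by
      have : ((Nat.primeCounting (s (n+1)) : ℝ)) ≤ 2 * (Nat.primeCounting (s n) : ℝ) := by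
        exact_mod_cast hcon
      linarith
    have hm : Nat.primeCounting (s n) ≤ Nat.primeCounting (s (n+1)) :=
      Nat.monotone_primeCounting (hs.monotone (Nat.le_succ n))
    have h0 : 0 < ((Nat.primeCounting (s (n+1)) : ℝ)) := by
      have := hg1 n hn
      exact_mod_cast (by omega : 0 < Nat.primeCounting (s (n+1)))
    have h2 := hmono _ _ h0 h1
    have h3 := hadd ((Nat.primeCounting (s n) : ℝ)) ((Nat.primeCounting (s n) : ℝ))
      (hgM n hn) le_rfl
    have h4 := hthin' n hn
    have h5 := hhpos n hn
    nlinarith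
  have hstep : ∀ n, N ≤ n → Nat.primeCounting (s n) + 2 ≤ Nat.primeCounting (s (n+1)) := by
    intro n hn
    have h1 := habs n hn
    have h2 := hg1 n hn
    omega
  have hdouble : ∀ n, N ≤ n → 2 * Nat.primeCounting (s n) ≤ Nat.primeCounting (s (n+1)) := by
    intro n hn; have := habs n hn; omega
  have hfinsep : ∀ n : ℕ, {p ∈ H | p ≤ n}.Finite := fun n =>
    (Set.finite_Iic n).subset (fun p hp => hp.2)
  set K := N + 2 with hK
  have count_lower : ∀ k, K ≤ k →
      Nat.primeCounting (s (2*k+1))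
        ≤ Nat.primeCounting (s (2*k)) + {p ∈ H | p ≤ s (2*k+1)}.ncard := by
    intro k hk
    have hk2 : 2 ≤ k := by omega
    have hab : s (2*k) < s (2*k+1) := hs (by omega)
    have hab' : s (2*k-2) < s (2*k-1) := hs (by omega)
    have hba : s (2*k-1) ≤ s (2*k) := hs.monotone (by omega)
    have e₁ := primes_Ioc_ncard (s (2*k)) (s (2*k+1) - 1)
    have e₂ := primes_Ioc_ncard (s (2*k-2)) (s (2*k-1) - 1)
    rw [Nat.max_eq_right (by omega)] at e₁
    rw [Nat.max_eq_right (by omega)] at e₂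
    have s₁ := primeCounting_succ_le (s (2*k+1) - 1)
    rw [show s (2*k+1) - 1 + 1 = s (2*k+1) from by omega] at s₁
    have s₂ := primeCounting_succ_le (s (2*k-1) - 1)
    rw [show s (2*k-1) - 1 + 1 = s (2*k-1) from by omega] at s₂
    have st := hstep (2*k-2) (by omega)
    rw [show 2*k-2+1 = 2*k-1 from by omega] at st
    have hsub : {p : ℕ | p.Prime ∧ s (2*k) < p ∧ p ≤ s (2*k+1) - 1}
        ∪ {p : ℕ | p.Prime ∧ s (2*k-2) < p ∧ p ≤ s (2*k-1) - 1}
        ⊆ {p ∈ H | p ≤ s (2*k+1)} := by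
      rintro p (⟨hp, h1, h2⟩ | ⟨hp, h1, h2⟩)
      · exact ⟨⟨hp, k, by omega, h1, by omega⟩, by omega⟩
      · refine ⟨⟨hp, k-1, by omega, ?_, ?_⟩, by omega⟩
        · rw [show 2*(k-1) = 2*k-2 from by omega]; exact h1
        · rw [show 2*(k-1)+1 = 2*k-1 from by omega]; omega
    have hdisj : Disjoint {p : ℕ | p.Prime ∧ s (2*k) < p ∧ p ≤ s (2*k+1) - 1}
        {p : ℕ | p.Prime ∧ s (2*k-2) < p ∧ p ≤ s (2*k-1) - 1} := by
      rw [Set.disjoint_left]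
      rintro p ⟨_, h1, _⟩ ⟨_, _, h2⟩
      omega
    have hfin₁ : {p : ℕ | p.Prime ∧ s (2*k) < p ∧ p ≤ s (2*k+1) - 1}.Finite :=
      (Set.finite_Iic (s (2*k+1) - 1)).subset (fun p hp => hp.2.2)
    have hfin₂ : {p : ℕ | p.Prime ∧ s (2*k-2) < p ∧ p ≤ s (2*k-1) - 1}.Finite :=
      (Set.finite_Iic (s (2*k-1) - 1)).subset (fun p hp => hp.2.2)
    have hcard := Set.ncard_union_eq hdisj hfin₁ hfin₂
    have hle := Set.ncard_le_ncard hsub (hfinsep (s (2*k+1)))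
    omega
  have count_upper : ∀ k : ℕ,
      {p ∈ H | p ≤ s (2*k+2)}.ncard ≤ Nat.primeCounting (s (2*k+1)) := by
    intro k
    rw [← primes_le_ncard (s (2*k+1))]
    refine Set.ncard_le_ncard ?_ ((Set.finite_Iic (s (2*k+1))).subset (fun p hp => hp.2))
    rintro p ⟨⟨hp, k', hk', h1, h2⟩, hpn⟩
    refine ⟨hp, ?_⟩
    by_cases hkk : k' ≤ k
    · have : s (2*k'+1) ≤ s (2*k+1) := hs.monotone (by omega)
      omega
    · exfalso
      have : s (2*k+2) ≤ s (2*k') := hs.monotone (by omega)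
      omega
  have hcard_mono : ∀ m n : ℕ, m ≤ n → {p ∈ H | p ≤ m}.ncard ≤ {p ∈ H | p ≤ n}.ncard := by
    intro m n hmn
    exact Set.ncard_le_ncard (fun p hp => ⟨hp.1, le_trans hp.2 hmn⟩) (hfinsep n)
  have hcard_le_pi : ∀ n : ℕ, {p ∈ H | p ≤ n}.ncard ≤ Nat.primeCounting n := by
    intro n
    rw [← primes_le_ncard n]
    exact Set.ncard_le_ncard (fun p hp => ⟨hp.1.1, hp.2⟩)
      ((Set.finite_Iic n).subset (fun p hp => hp.2))
  have hcard_ge : ∀ k, K ≤ k → 1 ≤ {p ∈ H | p ≤ s (2*k+1)}.ncard := by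
    intro k hk
    have h1 := count_lower k hk
    have h2 := hdouble (2*k) (by omega)
    have h3 := hg1 (2*k) (by omega)
    omega
  have est_low : ∀ k, K ≤ k →
      1 - 1/r ≤ h (({p ∈ H | p ≤ s (2*k+1)}.ncard : ℝ))
        / h ((Nat.primeCounting (s (2*k+1)) : ℝ)) := by
    intro k hk
    have hNk : N ≤ 2*k := by omega
    set A := (Nat.primeCounting (s (2*k+1)) : ℝ) with hA
    set B := (Nat.primeCounting (s (2*k)) : ℝ) with hB
    set c := (({p ∈ H | p ≤ s (2*k+1)}.ncard : ℕ) : ℝ) with hc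
    have hAB : A ≤ B + c := by rw [hA, hB, hc]; exact_mod_cast count_lower k hk
    have h2B : 2*B ≤ A := by rw [hA, hB]; exact_mod_cast hdouble (2*k) hNk
    have hB1 : (1:ℝ) ≤ B := by rw [hB]; exact_mod_cast hg1 (2*k) hNk
    have hBM : M < B := hgM (2*k) hNk
    have hApos : (0:ℝ) < A := by linarith
    have hhA : 0 < h A := hpos A hApos
    have hth : r * h B < h A := hthin' (2*k) hNk
    have hsemi : h A ≤ h (A - B) + h B := by
      have := hadd (A - B) B hBM (by linarith)
      rwa [sub_add_cancel] at this
    have hmc : h (A - B) ≤ h c := hmono _ _ (by linarith) (by linarith)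
    have hhB : 0 < h B := hpos B (by linarith)
    rw [le_div_iff₀ hhA]
    have hBr : h B < h A / r := by
      rw [lt_div_iff₀ hr0]
      nlinarith
    have hkey : (1 - 1/r) * h A = h A - h A / r := by ring
    linarith
  have est_up : ∀ k, K ≤ k →
      h (({p ∈ H | p ≤ s (2*k+2)}.ncard : ℝ))
        / h ((Nat.primeCounting (s (2*k+2)) : ℝ)) ≤ 1/r := by
    intro k hk
    have hNk : N ≤ 2*k+1 := by omega
    have hc1 : 1 ≤ {p ∈ H | p ≤ s (2*k+2)}.ncard :=
      le_trans (hcard_ge k hk) (hcard_mono _ _ (hs.monotone (by omega)))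
    have hcA : {p ∈ H | p ≤ s (2*k+2)}.ncard ≤ Nat.primeCounting (s (2*k+1)) := count_upper k
    set c := (({p ∈ H | p ≤ s (2*k+2)}.ncard : ℕ) : ℝ) with hcdef
    set A := (Nat.primeCounting (s (2*k+1)) : ℝ) with hAdef
    set D := (Nat.primeCounting (s (2*k+2)) : ℝ) with hDdef
    have hth : r * h A < h D := by
      have := hthin' (2*k+1) hNk
      rwa [show 2*k+1+1 = 2*k+2 from by omega] at this
    have hcpos : (0:ℝ) < c := by rw [hcdef]; exact_mod_cast hc1
    have hcA' : c ≤ A := by rw [hcdef, hAdef]; exact_mod_cast hcA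
    have hhA : 0 < h A := hpos A (by linarith)
    have hhD : 0 < h D := lt_trans (by positivity) hth
    have hhc : h c ≤ h A := hmono c A hcpos hcA'
    rw [div_le_div_iff₀ hhD hr0]
    nlinarith [mul_le_mul_of_nonneg_right hhc hr0.le]
  have hbound : ∀ᶠ n in atTop,
      0 ≤ h (({p ∈ H | p ≤ n}.ncard : ℝ)) / h ((Nat.primeCounting n : ℝ)) ∧
      h (({p ∈ H | p ≤ n}.ncard : ℝ)) / h ((Nat.primeCounting n : ℝ)) ≤ 1 := by
    rw [eventually_atTop]
    refine ⟨s (2*K+1), fun n hn => ?_⟩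
    have hc1 : 1 ≤ {p ∈ H | p ≤ n}.ncard :=
      le_trans (hcard_ge K le_rfl) (hcard_mono _ _ hn)
    have hπ1 : 1 ≤ Nat.primeCounting n :=
      le_trans (hg1 (2*K+1) (by omega)) (Nat.monotone_primeCounting hn)
    have hcpos : (0:ℝ) < (({p ∈ H | p ≤ n}.ncard : ℕ) : ℝ) := by exact_mod_cast hc1
    have hπpos : (0:ℝ) < (Nat.primeCounting n : ℝ) := by exact_mod_cast hπ1
    have h1 : 0 < h (({p ∈ H | p ≤ n}.ncard : ℝ)) := hpos _ hcpos
    have h2 : 0 < h ((Nat.primeCounting n : ℝ)) := hpos _ hπpos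
    constructor
    · exact div_nonneg h1.le h2.le
    · rw [div_le_one h2]
      exact hmono _ _ hcpos (by exact_mod_cast hcard_le_pi n)
  refine ⟨?_, hmid, ?_⟩
  · refine liminf_le_of_frequently_le ?_ ?_
    · have hφ : Tendsto (fun k : ℕ => s (2*k+2)) atTop atTop :=
        (hs.comp (show StrictMono fun k : ℕ => 2*k+2 from fun a b hab => by dsimp only; omega)).tendsto_atTop
      exact hφ.frequently ((eventually_atTop.mpr ⟨K, est_up⟩).frequently)
    · exact ⟨0, by rw [eventually_map]; exact hbound.mono fun n hn => hn.1⟩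
  · refine le_limsup_of_frequently_le ?_ ?_
    · have hφ : Tendsto (fun k : ℕ => s (2*k+1)) atTop atTop :=
        (hs.comp (show StrictMono fun k : ℕ => 2*k+1 from fun a b hab => by dsimp only; omega)).tendsto_atTop
      exact hφ.frequently ((eventually_atTop.mpr ⟨K, est_low⟩).frequently)
    · exact ⟨1, by rw [eventually_map]; exact hbound.mono fun n hn => hn.2⟩
end

section
/- Fix a prime q ≥ 19 and let H = ℙ ∩ ⋃_{k≥1} (q^{2k}, q^{2k+1}). Then the exponential density of H exists and equals 1: lim_{n→∞} log(π_H(n))/log(π(n)) = 1. -/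
open Filter Finset Nat

-- π x ≤ π y + #(primes in (y,x])
lemma pi_le_pi_add (y x : ℕ) :
    Nat.primeCounting x ≤ Nat.primeCounting y + #((Finset.Ioc y x).filter Nat.Prime) := by
  have h1 : Nat.primeCounting x = #((Finset.range (x+1)).filter Nat.Prime) := by
    rw [Nat.primeCounting, Nat.primeCounting', Nat.count_eq_card_filter_range]
  have h2 : Nat.primeCounting y = #((Finset.range (y+1)).filter Nat.Prime) := by
    rw [Nat.primeCounting, Nat.primeCounting', Nat.count_eq_card_filter_range]
  rw [h1, h2]
  calc #((Finset.range (x+1)).filter Nat.Prime)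
      ≤ #(((Finset.range (y+1)) ∪ Finset.Ioc y x).filter Nat.Prime) := by
        apply Finset.card_le_card
        apply Finset.filter_subset_filter
        intro n hn
        simp only [Finset.mem_range] at hn
        simp only [Finset.mem_union, Finset.mem_range, Finset.mem_Ioc]
        omega
    _ = #((Finset.range (y+1)).filter Nat.Prime ∪ (Finset.Ioc y x).filter Nat.Prime) := by
        rw [Finset.filter_union]
    _ ≤ _ := Finset.card_union_le _ _

lemma pi_le_self (n : ℕ) : Nat.primeCounting n ≤ n := by
  rw [Nat.primeCounting, Nat.primeCounting', Nat.count_eq_card_filter_range]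
  calc #((Finset.range (n+1)).filter Nat.Prime) ≤ #(Finset.Ioc 1 n) := by
        apply Finset.card_le_card
        intro p hp
        simp only [Finset.mem_filter, Finset.mem_range] at hp
        simp only [Finset.mem_Ioc]
        exact ⟨hp.2.one_lt, by omega⟩
    _ = n - 1 := by rw [Nat.card_Ioc]
    _ ≤ n := Nat.sub_le _ _

-- Chebyshev lower bound, nat form
lemma cheb_lower (m : ℕ) (hm : 4 ≤ m) :
    4 ^ m ≤ m * (2*m) ^ (Nat.primeCounting (2*m)) := by
  have h1 : Nat.centralBinom m ≤ (2*m) ^ (Nat.primeCounting (2*m)) := by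
    rw [← Nat.prod_pow_factorization_centralBinom m]
    have hsub : (Finset.range (2*m+1)).filter Nat.Prime ⊆ Finset.range (2*m+1) :=
      Finset.filter_subset _ _
    rw [← Finset.prod_subset hsub (fun p _ hp => by
      rw [Nat.factorization_eq_zero_of_not_prime _ (by simp only [Finset.mem_filter] at hp; tauto), pow_zero])]
    have hcard : #((Finset.range (2*m+1)).filter Nat.Prime) = Nat.primeCounting (2*m) := by
      have : (Finset.range (2*m+1)).filter Nat.Prime = Nat.primesBelow (2*m+1) := rfl
      rw [this, Nat.primesBelow_card_eq_primeCounting']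
      rfl
    rw [← hcard]
    apply Finset.prod_le_pow_card
    intro p _
    rw [Nat.centralBinom]
    exact Nat.pow_factorization_choose_le (by omega)
  calc 4 ^ m ≤ m * Nat.centralBinom m := (Nat.four_pow_lt_mul_centralBinom m hm).le
    _ ≤ m * (2*m) ^ (Nat.primeCounting (2*m)) := Nat.mul_le_mul_left m h1

-- product of primes in (t, y] is ≤ 4^y
lemma primes_interval_pow_le (t y : ℕ) :
    t ^ #((Finset.Ioc t y).filter Nat.Prime) ≤ 4 ^ y := by
  set P := (Finset.Ioc t y).filter Nat.Prime with hP
  have h1 : t ^ #P ≤ ∏ p ∈ P, p := by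
    apply Finset.pow_card_le_prod
    intro p hp
    simp only [hP, Finset.mem_filter, Finset.mem_Ioc] at hp
    omega
  have h2 : (∏ p ∈ P, p) ∣ primorial y := by
    apply Finset.prod_dvd_prod_of_subset
    intro p hp
    simp only [hP, Finset.mem_filter, Finset.mem_Ioc] at hp
    simp only [primorial, Finset.mem_filter, Finset.mem_range]
    exact ⟨by omega, hp.2⟩
  calc t ^ #P ≤ ∏ p ∈ P, p := h1
    _ ≤ primorial y := Nat.le_of_dvd (primorial_pos y) h2
    _ ≤ 4 ^ y := primorial_le_4_pow y

-- limit components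
lemma lim1 (q : ℕ) (hq2 : 2 ≤ q) :
    Tendsto (fun k : ℕ => (k : ℝ) / (q : ℝ) ^ k) atTop (nhds 0) := by
  have := tendsto_pow_const_div_const_pow_of_one_lt 1 (show (1:ℝ) < q by exact_mod_cast hq2)
  simpa using this

lemma lim2 (q : ℕ) (hq2 : 2 ≤ q) :
    Tendsto (fun k : ℕ => (k : ℝ) / ((q : ℝ) ^ k) ^ 2) atTop (nhds 0) := by
  have hq1 : (1:ℝ) < q := by exact_mod_cast hq2
  apply tendsto_of_tendsto_of_tendsto_of_le_of_le tendsto_const_nhds (lim1 q hq2)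
  · intro k; positivity
  · intro k
    apply div_le_div_of_nonneg_left (by positivity) (by positivity)
    nlinarith [pow_pos (show (0:ℝ) < q by linarith) k, one_le_pow₀ (le_of_lt hq1) (n := k)]

lemma lim3 (q : ℕ) :
    Tendsto (fun k : ℕ => (k : ℝ) * q / ((k : ℝ) + 2) ^ 3) atTop (nhds 0) := by
  have hden : Tendsto (fun k : ℕ => (k : ℝ) + 2) atTop atTop :=
    tendsto_atTop_add_const_right _ 2 tendsto_natCast_atTop_atTop
  apply tendsto_of_tendsto_of_tendsto_of_le_of_le tendsto_const_nhds
    (Tendsto.div_atTop (tendsto_const_nhds (x := (q:ℝ))) hden)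
  · intro k; positivity
  · intro k
    rw [div_le_div_iff₀ (by positivity) (by positivity)]
    have h1 : (0:ℝ) ≤ (k:ℝ) := Nat.cast_nonneg k
    have h2 : (0:ℝ) ≤ (q:ℝ) := Nat.cast_nonneg q
    nlinarith [mul_nonneg h1 h2, mul_nonneg (mul_nonneg h1 h2) h1, sq_nonneg ((k:ℝ)+1)]

lemma lim4 : Tendsto (fun k : ℕ => (k : ℝ) / (2 * k + 1)) atTop (nhds (1/2)) := by
  have hden : Tendsto (fun k : ℕ => 2 * (k : ℝ) + 1) atTop atTop :=
    tendsto_atTop_add_const_right _ 1 (Tendsto.const_mul_atTop two_pos tendsto_natCast_atTop_atTop)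
  have h : Tendsto (fun k : ℕ => 1/2 - (1/2) / (2 * (k:ℝ) + 1)) atTop (nhds (1/2)) := by
    have := Tendsto.div_atTop (tendsto_const_nhds (x := (1:ℝ)/2)) hden
    simpa using tendsto_const_nhds.sub this
  apply h.congr
  intro k
  have : (2:ℝ) * k + 1 ≠ 0 := by positivity
  field_simp
  ring

lemma lim5 (q : ℕ) (hq2 : 2 ≤ q) :
    Tendsto (fun k : ℕ => (((q : ℝ) ^ k) ^ 2)⁻¹) atTop (nhds 0) := by
  have h : Tendsto (fun k : ℕ => (((q:ℝ)^2)⁻¹) ^ k) atTop (nhds 0) := by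
    apply tendsto_pow_atTop_nhds_zero_of_lt_one (by positivity)
    rw [inv_lt_one_iff₀]
    right
    nlinarith [show (2:ℝ) ≤ q by exact_mod_cast hq2]
  apply h.congr
  intro k
  simp [← inv_pow, ← pow_mul, Nat.mul_comm]

set_option maxHeartbeats 2000000 in
lemma key_ev (q : ℕ) (hq : q.Prime) (hq19 : 19 ≤ q) :
    ∀ᶠ k : ℕ in atTop,
      ((q:ℝ) ^ (2*k+1)) / ((k:ℝ) + 2) ^ 3
        ≤ #((Finset.Ioc (q^(2*k)) (q^(2*k+1))).filter Nat.Prime) := by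
  have hq2 : 2 ≤ q := by omega
  have hq1R : (1:ℝ) < q := by exact_mod_cast show 1 < q by omega
  have hq0R : (0:ℝ) < q := by linarith
  have hlq : 0 < Real.log q := Real.log_pos hq1R
  have hl2 : 0 < Real.log 2 := Real.log_pos one_lt_two
  -- the two comparison sequences
  set L : ℕ → ℝ := fun k => (k:ℝ)/(q:ℝ)^k + 2*Real.log 2/Real.log q
      + (k:ℝ)*q/((k:ℝ)+2)^3 + (k:ℝ)/((q:ℝ)^k)^2 with hL
  set R : ℕ → ℝ := fun k => ((k:ℝ)/(2*k+1)) * ((q:ℝ) - (((q:ℝ)^k)^2)⁻¹) * (Real.log 2/Real.log q)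
    with hR
  have hLlim : Tendsto L atTop (nhds (0 + 2*Real.log 2/Real.log q + 0 + 0)) := by
    exact ((((lim1 q hq2).add tendsto_const_nhds).add (lim3 q)).add (lim2 q hq2))
  have hRlim : Tendsto R atTop
      (nhds ((1/2) * ((q:ℝ) - 0) * (Real.log 2/Real.log q))) := by
    exact (lim4.mul (tendsto_const_nhds.sub (lim5 q hq2))).mul tendsto_const_nhds
  have hlt : (0:ℝ) + 2*Real.log 2/Real.log q + 0 + 0
      < (1/2) * ((q:ℝ) - 0) * (Real.log 2/Real.log q) := by
    have hq19R : (19:ℝ) ≤ q := by exact_mod_cast hq19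
    rw [zero_add, add_zero, add_zero, sub_zero, mul_div_assoc]
    have h1 : 0 < Real.log 2 / Real.log q := by positivity
    nlinarith
  have hev := hLlim.eventually_lt hRlim hlt
  filter_upwards [hev, eventually_ge_atTop 1] with k hLR hk1
  -- notation
  set t : ℝ := (q:ℝ)^k with hts
  have ht0 : 0 < t := by positivity
  have hK0 : (0:ℝ) < (k:ℝ) := by exact_mod_cast hk1
  -- the interval prime count
  set c : ℕ := #((Finset.Ioc (q^(2*k)) (q^(2*k+1))).filter Nat.Prime) with hc
  -- cast identities
  have hyc : ((q^(2*k) : ℕ) : ℝ) = t^2 := by push_cast; rw [hts, ← pow_mul]; ring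
  have hxc : ((q^(2*k+1) : ℕ) : ℝ) = (q:ℝ) * t^2 := by push_cast; rw [hts, ← pow_mul]; ring
  -- G1 : Chebyshev lower bound for π x
  obtain ⟨m, hm⟩ := show Odd (q ^ (2*k+1)) from (hq.odd_of_ne_two (by omega)).pow
  have hxq : q ≤ q^(2*k+1) := Nat.le_self_pow (by omega) q
  have hm4 : 4 ≤ m := by omega
  have hcheb := cheb_lower m hm4
  have hπx := Nat.monotone_primeCounting (show 2*m ≤ q^(2*k+1) by omega)
  set A : ℝ := (Nat.primeCounting (q^(2*k+1)) : ℝ) with hA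
  have hA0 : 0 ≤ A := by positivity
  have hmR : 2 * (m:ℝ) + 1 = (q:ℝ) * t^2 := by
    rw [← hxc]; exact_mod_cast congrArg (Nat.cast : ℕ → ℝ) hm.symm
  have hlogx : Real.log ((q^(2*k+1) : ℕ) : ℝ) = (2*(k:ℝ)+1) * Real.log q := by
    push_cast
    rw [Real.log_pow]; push_cast; ring
  have hG1 : ((q:ℝ) * t^2 - 1) * Real.log 2 ≤ (2*(k:ℝ)+1) * Real.log q * (1 + A) := by
    have hcR : ((4:ℝ))^m ≤ (m:ℝ) * ((2*m : ℕ):ℝ) ^ (Nat.primeCounting (2*m)) := by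
      exact_mod_cast hcheb
    have hm0 : (0:ℝ) < (m:ℝ) := by exact_mod_cast show _ by omega
    have h2m0 : (0:ℝ) < ((2*m : ℕ):ℝ) := by exact_mod_cast show _ by omega
    have hlog := Real.log_le_log (by positivity) hcR
    rw [Real.log_pow, Real.log_mul (ne_of_gt hm0) (by positivity), Real.log_pow] at hlog
    -- bound each term
    have hb1 : Real.log (m:ℝ) ≤ (2*(k:ℝ)+1) * Real.log q := by
      rw [← hlogx]
      exact Real.log_le_log hm0 (by exact_mod_cast show _ by omega)
    have hb2 : Real.log ((2*m : ℕ):ℝ) ≤ (2*(k:ℝ)+1) * Real.log q := by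
      rw [← hlogx]
      exact Real.log_le_log h2m0 (by exact_mod_cast show _ by omega)
    have hb3 : (0:ℝ) ≤ Real.log ((2*m : ℕ):ℝ) := Real.log_nonneg (by exact_mod_cast show _ by omega)
    have hπxR : (Nat.primeCounting (2*m) : ℝ) ≤ A := by rw [hA]; exact_mod_cast hπx
    have hπ2m0 : (0:ℝ) ≤ (Nat.primeCounting (2*m) : ℝ) := by positivity
    have hlog4 : Real.log (4:ℝ) = 2 * Real.log 2 := by
      rw [show (4:ℝ) = 2^2 by norm_num, Real.log_pow]; push_cast; ring
    have hmain : (m:ℝ) * (2 * Real.log 2) ≤ (2*(k:ℝ)+1) * Real.log q * (1 + A) := by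
      rw [← hlog4]
      calc (m:ℝ) * Real.log 4 ≤ Real.log (m:ℝ)
            + (Nat.primeCounting (2*m) : ℝ) * Real.log ((2*m : ℕ):ℝ) := hlog
        _ ≤ (2*(k:ℝ)+1) * Real.log q + A * ((2*(k:ℝ)+1) * Real.log q) := by
            have := mul_le_mul hπxR hb2 hb3 hA0
            linarith
        _ = (2*(k:ℝ)+1) * Real.log q * (1 + A) := by ring
    nlinarith [hmain, hmR]
  -- G2 : upper bound for π y
  set B : ℝ := (Nat.primeCounting (q^(2*k)) : ℝ) with hB
  set P : ℕ := #((Finset.Ioc (q^k) (q^(2*k))).filter Nat.Prime) with hPdef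
  have hG2a : (P:ℝ) * ((k:ℝ) * Real.log q) ≤ 2 * t^2 * Real.log 2 := by
    have hnat := primes_interval_pow_le (q^k) (q^(2*k))
    have hR2 : ((q^k : ℕ):ℝ) ^ P ≤ ((4:ℝ)) ^ (q^(2*k)) := by exact_mod_cast hnat
    have hqk0 : (0:ℝ) < ((q^k : ℕ):ℝ) := by positivity
    have hlog := Real.log_le_log (by positivity) hR2
    rw [Real.log_pow, Real.log_pow] at hlog
    have h1 : Real.log ((q^k : ℕ):ℝ) = (k:ℝ) * Real.log q := by
      push_cast; rw [Real.log_pow]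
    have hlog4 : Real.log (4:ℝ) = 2 * Real.log 2 := by
      rw [show (4:ℝ) = 2^2 by norm_num, Real.log_pow]; push_cast; ring
    rw [h1, hlog4] at hlog
    have hyt : ((q^(2*k):ℕ):ℝ) = t^2 := hyc
    calc (P:ℝ) * ((k:ℝ) * Real.log q) ≤ ((q^(2*k):ℕ):ℝ) * (2 * Real.log 2) := hlog
      _ = 2 * t^2 * Real.log 2 := by rw [hyt]; ring
  have hG2b : B ≤ t + (P:ℝ) := by
    have h1 := pi_le_pi_add (q^k) (q^(2*k))
    have h2 := pi_le_self (q^k)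
    have : (Nat.primeCounting (q^(2*k)) : ℕ) ≤ q^k + P := by omega
    have := (Nat.cast_le (α := ℝ)).mpr this
    push_cast at this
    calc B ≤ (q:ℝ)^k + (P:ℝ) := by rw [hB]; exact_mod_cast this
      _ = t + (P:ℝ) := by rw [hts]
  -- F1
  have hF1 : A ≤ B + (c:ℝ) := by
    have := pi_le_pi_add (q^(2*k)) (q^(2*k+1))
    rw [hA, hB, hc]
    exact_mod_cast this
  -- now the scaled inequality
  have hK2 : (0:ℝ) < ((k:ℝ)+2)^3 := by positivity
  have h2k1 : (0:ℝ) < 2*(k:ℝ)+1 := by positivity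
  have hstar : t + 2*t^2*Real.log 2/((k:ℝ)*Real.log q) + (q:ℝ)*t^2/(((k:ℝ)+2)^3) + 1
      ≤ ((q:ℝ)*t^2 - 1) * Real.log 2 / ((2*(k:ℝ)+1) * Real.log q) := by
    have hmul := mul_le_mul_of_nonneg_left hLR.le (show (0:ℝ) ≤ t^2/(k:ℝ) by positivity)
    have hLid : t^2/(k:ℝ) * L k
        = t + 2*t^2*Real.log 2/((k:ℝ)*Real.log q) + (q:ℝ)*t^2/(((k:ℝ)+2)^3) + 1 := by
      rw [hL]
      simp only [← hts]
      field_simp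
    have hRid : t^2/(k:ℝ) * R k
        = ((q:ℝ)*t^2 - 1) * Real.log 2 / ((2*(k:ℝ)+1) * Real.log q) := by
      rw [hR]
      simp only [← hts]
      field_simp
    rw [hLid, hRid] at hmul
    exact hmul
  -- unpack divisions
  have hAlow : ((q:ℝ)*t^2 - 1) * Real.log 2 / ((2*(k:ℝ)+1) * Real.log q) ≤ 1 + A := by
    rw [div_le_iff₀ (by positivity)]
    nlinarith [hG1]
  have hPhigh : (P:ℝ) ≤ 2*t^2*Real.log 2/((k:ℝ)*Real.log q) := by
    rw [le_div_iff₀ (by positivity)]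
    nlinarith [hG2a]
  -- conclude
  have hgoal : (q:ℝ)*t^2/(((k:ℝ)+2)^3) ≤ (c:ℝ) := by linarith
  calc ((q:ℝ) ^ (2*k+1)) / ((k:ℝ) + 2) ^ 3
      = (q:ℝ)*t^2/(((k:ℝ)+2)^3) := by
        rw [hts, ← pow_mul]; ring_nf
    _ ≤ (c:ℝ) := hgoal

lemma cube_le (q : ℕ) (hq19 : 19 ≤ q) : ∀ k, 1 ≤ k → 2 * (k+2)^3 ≤ q^(2*k+1) := by
  intro k hk
  induction k with
  | zero => omega
  | succ n ih =>
    rcases Nat.eq_or_lt_of_le hk with h | h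
    · have : q^3 ≥ 19^3 := Nat.pow_le_pow_left hq19 3
      simp only [← h]
      norm_num
      nlinarith
    · have hn1 : 1 ≤ n := by omega
      have ihn := ih hn1
      have hstep : 2 * (n+3)^3 ≤ 8 * (2 * (n+2)^3) := by ring_nf; omega
      calc 2 * (n+1+2)^3 ≤ 8 * (2 * (n+2)^3) := by
            have : n+1+2 = n+3 := by ring
            rw [this]; exact hstep
        _ ≤ 8 * q^(2*n+1) := by omega
        _ ≤ q^2 * q^(2*n+1) := by
            have : 8 ≤ q^2 := by nlinarith
            exact Nat.mul_le_mul_right _ this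
        _ = q^(2*(n+1)+1) := by rw [← pow_add]; ring_nf

lemma log_div_tendsto : Tendsto (fun k : ℕ => Real.log ((k:ℝ)+2) / ((k:ℝ)+2)) atTop (nhds 0) := by
  have h := Real.isLittleO_log_id_atTop.tendsto_div_nhds_zero
  have hcomp : Tendsto (fun k : ℕ => (k:ℝ)+2) atTop atTop :=
    tendsto_atTop_add_const_right _ 2 tendsto_natCast_atTop_atTop
  exact h.comp hcomp

lemma log_small_ev (q : ℕ) (hq19 : 19 ≤ q) :
    ∀ᶠ k : ℕ in atTop, 3 * Real.log ((k:ℝ)+2) ≤ (k:ℝ) * Real.log q := by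
  have hlq : 0 < Real.log q := Real.log_pos (by exact_mod_cast show 1 < q by omega)
  have h := log_div_tendsto
  have hev := h.eventually (eventually_le_nhds (show (0:ℝ) < Real.log q / 12 by positivity))
  filter_upwards [hev, eventually_ge_atTop 2] with k hk hk2
  have hk2R : (2:ℝ) ≤ (k:ℝ) := by exact_mod_cast hk2
  have hpos : (0:ℝ) < (k:ℝ)+2 := by linarith
  rw [div_le_iff₀ hpos] at hk
  have : (k:ℝ) + 2 ≤ 2 * k := by linarith
  nlinarith [Real.log_nonneg (show (1:ℝ) ≤ (k:ℝ)+2 by linarith)]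

lemma tendsto_a (q : ℕ) (hq19 : 19 ≤ q) :
    Tendsto (fun k : ℕ => ((2*(k:ℝ)+1) * Real.log q - 3 * Real.log ((k:ℝ)+2))
      / ((2*(k:ℝ)+3) * Real.log q)) atTop (nhds 1) := by
  have hlq : 0 < Real.log q := Real.log_pos (by exact_mod_cast show 1 < q by omega)
  have h1 : Tendsto (fun k : ℕ => (2*(k:ℝ)+1)/(2*(k:ℝ)+3)) atTop (nhds 1) := by
    have hden : Tendsto (fun k : ℕ => 2*(k:ℝ)+3) atTop atTop :=
      tendsto_atTop_add_const_right _ 3 (Tendsto.const_mul_atTop two_pos tendsto_natCast_atTop_atTop)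
    have h2 := Tendsto.div_atTop (tendsto_const_nhds (x := (2:ℝ))) hden
    have h3 : Tendsto (fun k : ℕ => 1 - 2/(2*(k:ℝ)+3)) atTop (nhds 1) := by
      simpa using tendsto_const_nhds.sub h2
    apply h3.congr
    intro k
    have : (2:ℝ)*(k:ℝ)+3 ≠ 0 := by positivity
    field_simp
    ring
  have h2 : Tendsto (fun k : ℕ => Real.log ((k:ℝ)+2) / (2*(k:ℝ)+3)) atTop (nhds 0) := by
    apply tendsto_of_tendsto_of_tendsto_of_le_of_le tendsto_const_nhds log_div_tendsto
    · intro k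
      have h0 : (0:ℝ) ≤ Real.log ((k:ℝ)+2) := Real.log_nonneg (by nlinarith [Nat.cast_nonneg (α := ℝ) k])
      positivity
    · intro k
      apply div_le_div_of_nonneg_left (Real.log_nonneg (by nlinarith [Nat.cast_nonneg (α := ℝ) k])) (by positivity)
      push_cast; linarith [Nat.cast_nonneg (α := ℝ) k]
  have hmain : Tendsto (fun k : ℕ => (2*(k:ℝ)+1)/(2*(k:ℝ)+3)
      - (3/Real.log q) * (Real.log ((k:ℝ)+2) / (2*(k:ℝ)+3))) atTop (nhds 1) := by
    have := h1.sub ((tendsto_const_nhds (x := 3/Real.log q)).mul h2)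
    simpa using this
  apply hmain.congr
  intro k
  have hne1 : (2:ℝ)*(k:ℝ)+3 ≠ 0 := by positivity
  field_simp

set_option maxHeartbeats 2000000 in
theorem alternating_powers_exp_density_one (q : ℕ) (hq : q.Prime) (hq19 : 19 ≤ q) :
    let H : Set ℕ := {p : ℕ | p.Prime ∧ ∃ k : ℕ, 1 ≤ k ∧ q ^ (2 * k) < p ∧ p < q ^ (2 * k + 1)}
    Tendsto
      (fun n : ℕ => Real.log (({p ∈ H | p ≤ n}.ncard : ℝ)) /
        Real.log ((Nat.primeCounting n : ℝ)))
      atTop (nhds 1) := by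
  intro H
  have hq2 : 2 ≤ q := by omega
  have hq1 : 1 < q := by omega
  have hq1R : (1:ℝ) < q := by exact_mod_cast hq1
  have hlq : 0 < Real.log q := Real.log_pos hq1R
  -- index function
  set kf : ℕ → ℕ := fun n => (Nat.log q n - 1)/2 with hkf
  have h_kf : Tendsto kf atTop atTop := by
    rw [tendsto_atTop_atTop]
    intro b
    refine ⟨q^(2*b+3), fun n hn => ?_⟩
    have hn0 : n ≠ 0 := by
      have : 1 ≤ q^(2*b+3) := Nat.one_le_pow _ _ (by omega)
      omega
    have hL : 2*b+3 ≤ Nat.log q n := (Nat.le_log_iff_pow_le hq1 hn0).mpr hn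
    simp only [hkf]
    omega
  -- the lower comparison function
  set a : ℕ → ℝ := fun k => ((2*(k:ℝ)+1) * Real.log q - 3 * Real.log ((k:ℝ)+2))
      / ((2*(k:ℝ)+3) * Real.log q) with ha
  have hga : Tendsto (fun n => a (kf n)) atTop (nhds 1) := (tendsto_a q hq19).comp h_kf
  -- eventual bounds
  have E1 : ∀ᶠ n : ℕ in atTop,
      q^(2*(kf n)+1) ≤ n ∧ 1 ≤ kf n ∧ n < q^(2*(kf n)+3) := by
    filter_upwards [eventually_ge_atTop (q^3)] with n hn
    have hn0 : n ≠ 0 := by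
      have : 1 ≤ q^3 := Nat.one_le_pow _ _ (by omega)
      omega
    have hL : 3 ≤ Nat.log q n := (Nat.le_log_iff_pow_le hq1 hn0).mpr hn
    have h1 : q^(2*(kf n)+1) ≤ n := by
      have h2 : 2*(kf n)+1 ≤ Nat.log q n := by simp only [hkf]; omega
      calc q^(2*(kf n)+1) ≤ q^(Nat.log q n) := Nat.pow_le_pow_right (by omega) h2
        _ ≤ n := Nat.pow_log_le_self q hn0
    have h3 : n < q^(2*(kf n)+3) := by
      have h4 : Nat.log q n + 1 ≤ 2*(kf n)+3 := by simp only [hkf]; omega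
      calc n < q^(Nat.log q n + 1) := Nat.lt_pow_succ_log_self hq1 n
        _ ≤ q^(2*(kf n)+3) := Nat.pow_le_pow_right (by omega) h4
    exact ⟨h1, by simp only [hkf]; omega, h3⟩
  have E2 := h_kf.eventually (key_ev q hq hq19)
  have E4 := h_kf.eventually (log_small_ev q hq19)
  have hboth : ∀ᶠ n : ℕ in atTop,
      a (kf n) ≤ Real.log (({p ∈ H | p ≤ n}.ncard : ℝ)) / Real.log ((Nat.primeCounting n : ℝ))
      ∧ Real.log (({p ∈ H | p ≤ n}.ncard : ℝ)) / Real.log ((Nat.primeCounting n : ℝ)) ≤ 1 := by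
    filter_upwards [E1, E2, E4] with n hE1 hkey hlogsm
    obtain ⟨h1, hk1, h3⟩ := hE1
    set k := kf n with hkdef
    set S : Set ℕ := {p ∈ H | p ≤ n} with hS
    have hSfin : S.Finite := (Set.finite_Iic n).subset (fun p hp => hp.2)
    -- q^(2k+1) is not prime
    have hnp : ¬ (q^(2*k+1)).Prime := by
      intro hp
      have hd : q ∣ q^(2*k+1) := dvd_pow_self q (by omega)
      rcases (hp.eq_one_or_self_of_dvd q hd) with h | h
      · omega
      · have : q^1 = q^(2*k+1) := by rw [pow_one, ← h]
        have := Nat.pow_right_injective hq2 this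
        omega
    -- the finset of primes in the interval
    set Sk := (Finset.Ioc (q^(2*k)) (q^(2*k+1))).filter Nat.Prime with hSk
    have hsub : ↑Sk ⊆ S := by
      intro p hp
      simp only [hSk, Finset.coe_filter, Set.mem_setOf_eq, Finset.mem_Ioc] at hp
      obtain ⟨⟨hp1, hp2⟩, hp3⟩ := hp
      have hplt : p < q^(2*k+1) := by
        rcases Nat.lt_or_ge p (q^(2*k+1)) with h | h
        · exact h
        · exfalso; have : p = q^(2*k+1) := by omega
          rw [this] at hp3; exact hnp hp3
      refine ⟨⟨hp3, k, hk1, hp1, hplt⟩, by omega⟩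
    have hcard : (Sk.card : ℝ) ≤ (S.ncard : ℝ) := by
      have := Set.ncard_le_ncard hsub hSfin
      rw [Set.ncard_coe_finset] at this
      exact_mod_cast this
    -- lower bound on ncard
    have hkey2 : (q:ℝ)^(2*k+1) / ((k:ℝ)+2)^3 ≤ (S.ncard : ℝ) := le_trans hkey hcard
    -- 2 ≤ the lower bound
    have hcube := cube_le q hq19 k hk1
    have hcubeR : 2 * ((k:ℝ)+2)^3 ≤ (q:ℝ)^(2*k+1) := by exact_mod_cast hcube
    have hk2pos : (0:ℝ) < ((k:ℝ)+2)^3 := by positivity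
    have h2le : (2:ℝ) ≤ (q:ℝ)^(2*k+1) / ((k:ℝ)+2)^3 := by
      rw [le_div_iff₀ hk2pos]; linarith
    have hS2 : (2:ℝ) ≤ (S.ncard : ℝ) := le_trans h2le hkey2
    -- upper bound : S ⊆ primes ≤ n
    have hupn : S.ncard ≤ Nat.primeCounting n := by
      have hsub2 : S ⊆ ↑((Finset.range (n+1)).filter Nat.Prime) := by
        intro p hp
        obtain ⟨hpH, hpn⟩ := hp
        simp only [Finset.coe_filter, Set.mem_setOf_eq, Finset.mem_range]
        exact ⟨by omega, hpH.1⟩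
      have := Set.ncard_le_ncard hsub2 (Set.Finite.ofFinset _ (fun x => Iff.rfl))
      rw [Set.ncard_coe_finset] at this
      have hpieq : Nat.primeCounting n = #((Finset.range (n+1)).filter Nat.Prime) := by
        rw [Nat.primeCounting, Nat.primeCounting', Nat.count_eq_card_filter_range]
      omega
    have hupnR : (S.ncard : ℝ) ≤ (Nat.primeCounting n : ℝ) := by exact_mod_cast hupn
    have hπ2 : (2:ℝ) ≤ (Nat.primeCounting n : ℝ) := le_trans hS2 hupnR
    have hπpos : (0:ℝ) < Real.log ((Nat.primeCounting n : ℝ)) := Real.log_pos (by linarith)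
    -- numerator bounds
    have hnum1 : Real.log ((S.ncard : ℝ)) ≤ Real.log ((Nat.primeCounting n : ℝ)) :=
      Real.log_le_log (by linarith) hupnR
    have hloglow : (2*(k:ℝ)+1) * Real.log q - 3 * Real.log ((k:ℝ)+2)
        ≤ Real.log ((S.ncard : ℝ)) := by
      have hqpow : (0:ℝ) < (q:ℝ)^(2*k+1) / ((k:ℝ)+2)^3 := by positivity
      have := Real.log_le_log hqpow hkey2
      rw [Real.log_div (by positivity) (by positivity), Real.log_pow, Real.log_pow] at this
      calc (2*(k:ℝ)+1) * Real.log q - 3 * Real.log ((k:ℝ)+2)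
          = ((2*k+1 : ℕ):ℝ) * Real.log q - ((3:ℕ):ℝ) * Real.log ((k:ℝ)+2) := by push_cast; ring
        _ ≤ Real.log ((S.ncard : ℝ)) := this
    have hdenup : Real.log ((Nat.primeCounting n : ℝ)) ≤ (2*(k:ℝ)+3) * Real.log q := by
      have hπn : (Nat.primeCounting n : ℝ) ≤ (q:ℝ)^(2*k+3) := by
        have h5 : Nat.primeCounting n ≤ n := pi_le_self n
        have : Nat.primeCounting n ≤ q^(2*k+3) := by omega
        exact_mod_cast this
      have := Real.log_le_log (by linarith) hπn
      rw [Real.log_pow] at this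
      calc Real.log ((Nat.primeCounting n : ℝ)) ≤ ((2*k+3 : ℕ):ℝ) * Real.log q := this
        _ = (2*(k:ℝ)+3) * Real.log q := by push_cast; ring
    have hnumpos : 0 ≤ (2*(k:ℝ)+1) * Real.log q - 3 * Real.log ((k:ℝ)+2) := by
      have : (k:ℝ) * Real.log q ≤ (2*(k:ℝ)+1) * Real.log q := by
        have : (k:ℝ) ≤ 2*(k:ℝ)+1 := by linarith [Nat.cast_nonneg (α := ℝ) k]
        nlinarith
      linarith [hlogsm]
    constructor
    · rw [ha]
      exact div_le_div₀ (Real.log_nonneg (by linarith)) hloglow hπpos hdenup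
    · rw [div_le_one hπpos]
      exact hnum1
  exact tendsto_of_tendsto_of_tendsto_of_le_of_le' hga tendsto_const_nhds
    (hboth.mono fun n h => h.1) (hboth.mono fun n h => h.2)
end
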